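/- arXiv:1101.0323 — 2 statements merged into one kernel-verified Lean document; each statement's English description precedes it below -/
import Mathlib

section
/- In the number field model, for every κ ∈ K ∪ {∞}, the subgroup T^κ of X² is a closed subgroup which is isomorphic as a topological group to the d-dimensional torus 𝕋^d = ℝ^d/ℤ^d; equivalently, the quotient (X̂×X̂)/(X̂²)^κ is isomorphic to ℤ^d. -/
noncomputable section

/-- The ambient space `ℝ^{r₁} ⊕ ℂ^{r₂}`. -/
abbrev Amb (r₁ r₂ : ℕ) : Type := (Fin r₁ → ℝ) × (Fin r₂ → ℂ)

/-- The multiplicative action of `θ ∈ K` on the ambient space, acting on the `i`-th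
coordinate by multiplication by `σ_i(θ)`. -/
def mulK {K : Type} [Field K] {r₁ r₂ : ℕ} (σR : Fin r₁ → (K →+* ℝ))
    (σC : Fin r₂ → (K →+* ℂ)) (θ : K) (x : Amb r₁ r₂) : Amb r₁ r₂ :=
  (fun i => σR i θ * x.1 i, fun j => σC j θ * x.2 j)

/-- The embedding `σ : K → ℝ^{r₁} ⊕ ℂ^{r₂}`. -/
def embK {K : Type} [Field K] {r₁ r₂ : ℕ} (σR : Fin r₁ → (K →+* ℝ))
    (σC : Fin r₂ → (K →+* ℂ)) (θ : K) : Amb r₁ r₂ :=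
  (fun i => σR i θ, fun j => σC j θ)

/-- The image in `K` of a unit of the ring of integers. -/
def unitToK {K : Type} [Field K] [NumberField K] (u : (NumberField.RingOfIntegers K)ˣ) : K :=
  algebraMap (NumberField.RingOfIntegers K) K (u : NumberField.RingOfIntegers K)

/-- The pairing `⟨ξ,x⟩ = Σ ξᵢxᵢ + Σ 2 Re(ξⱼxⱼ)` on the ambient space. -/
def pairAmb {r₁ r₂ : ℕ} (ξ x : Amb r₁ r₂) : ℝ :=
  (∑ i, ξ.1 i * x.1 i) + ∑ j, 2 * (ξ.2 j * x.2 j).re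

/-- `σ(𝒪_K)`, as an additive subgroup of the ambient space. -/
def ringLat {K : Type} [Field K] [NumberField K] {r₁ r₂ : ℕ} (σR : Fin r₁ → (K →+* ℝ))
    (σC : Fin r₂ → (K →+* ℂ)) : AddSubgroup (Amb r₁ r₂) :=
  AddSubgroup.closure
    (Set.range fun a : NumberField.RingOfIntegers K =>
      embK σR σC (algebraMap (NumberField.RingOfIntegers K) K a))

/-- The dual lattice `X̂` of `X = (ℝ^{r₁}⊕ℂ^{r₂})/Γ`. -/
def hatX {r₁ r₂ : ℕ} (Γ : AddSubgroup (Amb r₁ r₂)) : Set (Amb r₁ r₂) :=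
  {ξ | ∀ γ ∈ Γ, ∃ m : ℤ, pairAmb ξ γ = (m : ℝ)}

/-- `(X̂²)^κ` for `κ ∈ K ∪ {∞}`, where `∞` is encoded as `none`. -/
def hatSq {K : Type} [Field K] {r₁ r₂ : ℕ} (σR : Fin r₁ → (K →+* ℝ))
    (σC : Fin r₂ → (K →+* ℂ)) (Γ : AddSubgroup (Amb r₁ r₂)) :
    Option K → Set (Amb r₁ r₂ × Amb r₁ r₂)
  | some κ => {ξ | ξ.1 ∈ hatX Γ ∧ ξ.2 ∈ hatX Γ ∧ ξ.1 + mulK σR σC κ ξ.2 = 0}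
  | none => {ξ | ξ.1 ∈ hatX Γ ∧ ξ.2 = 0}

/-- The subtorus `T^κ ⊆ X²`, defined as the annihilator of `(X̂²)^κ`. -/
def Tk {K : Type} [Field K] {r₁ r₂ : ℕ} (σR : Fin r₁ → (K →+* ℝ))
    (σC : Fin r₂ → (K →+* ℂ)) (Γ : AddSubgroup (Amb r₁ r₂)) (κ : Option K) :
    Set ((Amb r₁ r₂ × Amb r₁ r₂) ⧸ Γ.prod Γ) :=
  {x | ∃ x' : Amb r₁ r₂ × Amb r₁ r₂,
    (QuotientAddGroup.mk x' : (Amb r₁ r₂ × Amb r₁ r₂) ⧸ Γ.prod Γ) = x ∧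
    ∀ ξ ∈ hatSq σR σC Γ κ, ∃ m : ℤ, pairAmb ξ.1 x'.1 + pairAmb ξ.2 x'.2 = (m : ℝ)}

/-- The diagonal multiplicative action of `θ ∈ K` on `(ℝ^{r₁}⊕ℂ^{r₂})²`. -/
def mulKsq {K : Type} [Field K] {r₁ r₂ : ℕ} (σR : Fin r₁ → (K →+* ℝ))
    (σC : Fin r₂ → (K →+* ℂ)) (θ : K) (x : Amb r₁ r₂ × Amb r₁ r₂) :
    Amb r₁ r₂ × Amb r₁ r₂ :=
  (mulK σR σC θ x.1, mulK σR σC θ x.2)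

/-- The complex-valued `i`-th embedding, for `i` in the index set `I = Fin r₁ ⊕ Fin r₂`. -/
def embC {K : Type} [Field K] {r₁ r₂ : ℕ} (σR : Fin r₁ → (K →+* ℝ))
    (σC : Fin r₂ → (K →+* ℂ)) : Fin r₁ ⊕ Fin r₂ → K → ℂ
  | Sum.inl i => fun θ => (σR i θ : ℂ)
  | Sum.inr j => fun θ => σC j θ

/-- `λ_i(n) = log |σ_i(ζ^n)|`. -/
def lam {K : Type} [Field K] [NumberField K] {r r₁ r₂ : ℕ} (σR : Fin r₁ → (K →+* ℝ))
    (σC : Fin r₂ → (K →+* ℂ)) (ζ : (Fin r → ℤ) → (NumberField.RingOfIntegers K)ˣ)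
    (i : Fin r₁ ⊕ Fin r₂) (n : Fin r → ℤ) : ℝ :=
  Real.log ‖embC σR σC i (unitToK (ζ n))‖

/-- The subspace `V^κ` of `(ℝ^{r₁}⊕ℂ^{r₂})²`, for `κ ∈ K ∪ {∞}`. -/
def Vk {K : Type} [Field K] {r₁ r₂ : ℕ} (σR : Fin r₁ → (K →+* ℝ))
    (σC : Fin r₂ → (K →+* ℂ)) : Option K → Set (Amb r₁ r₂ × Amb r₁ r₂)
  | some κ => {v | v.2 = mulK σR σC κ v.1}
  | none => {v | v.1 = 0}

/-- The coordinate subspace `V_i` of `ℝ^{r₁}⊕ℂ^{r₂}`. -/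
def Vslice (r₁ r₂ : ℕ) : Fin r₁ ⊕ Fin r₂ → Set (Amb r₁ r₂)
  | Sum.inl i => {x | (∀ i', i' ≠ i → x.1 i' = 0) ∧ x.2 = 0}
  | Sum.inr j => {x | x.1 = 0 ∧ ∀ j', j' ≠ j → x.2 j' = 0}

/-- `V_i^□ = V_i ⊕ V_i ⊆ (ℝ^{r₁}⊕ℂ^{r₂})²`. -/
def VsliceSq (r₁ r₂ : ℕ) (i : Fin r₁ ⊕ Fin r₂) : Set (Amb r₁ r₂ × Amb r₁ r₂) :=
  {v | v.1 ∈ Vslice r₁ r₂ i ∧ v.2 ∈ Vslice r₁ r₂ i}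

/-- The image of a subset of `X²` under `ζ_Δ^n`. -/
def setAct {K : Type} [Field K] [NumberField K] {r r₁ r₂ : ℕ} (σR : Fin r₁ → (K →+* ℝ))
    (σC : Fin r₂ → (K →+* ℂ)) (Γ : AddSubgroup (Amb r₁ r₂))
    (ζ : (Fin r → ℤ) → (NumberField.RingOfIntegers K)ˣ) (n : Fin r → ℤ)
    (S : Set ((Amb r₁ r₂ × Amb r₁ r₂) ⧸ Γ.prod Γ)) :
    Set ((Amb r₁ r₂ × Amb r₁ r₂) ⧸ Γ.prod Γ) :=
  {y | ∃ x' : Amb r₁ r₂ × Amb r₁ r₂,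
    (QuotientAddGroup.mk x' : (Amb r₁ r₂ × Amb r₁ r₂) ⧸ Γ.prod Γ) ∈ S ∧
    y = QuotientAddGroup.mk (mulKsq σR σC (unitToK (ζ n)) x')}

/-- A `d`-dimensional homogeneous `ζ_Δ`-invariant subset
`L = {ζ_Δ^n·z' : n ∈ ℤ^r, z' ∈ z + T^κ}`. -/
def homogSet {K : Type} [Field K] [NumberField K] {r r₁ r₂ : ℕ} (σR : Fin r₁ → (K →+* ℝ))
    (σC : Fin r₂ → (K →+* ℂ)) (Γ : AddSubgroup (Amb r₁ r₂))
    (ζ : (Fin r → ℤ) → (NumberField.RingOfIntegers K)ˣ)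
    (z : (Amb r₁ r₂ × Amb r₁ r₂) ⧸ Γ.prod Γ) (κ : Option K) :
    Set ((Amb r₁ r₂ × Amb r₁ r₂) ⧸ Γ.prod Γ) :=
  {y | ∃ (n : Fin r → ℤ) (x' : Amb r₁ r₂ × Amb r₁ r₂),
    (QuotientAddGroup.mk x' : (Amb r₁ r₂ × Amb r₁ r₂) ⧸ Γ.prod Γ) ∈ (z + ·) '' Tk σR σC Γ κ ∧
    y = QuotientAddGroup.mk (mulKsq σR σC (unitToK (ζ n)) x')}

/-!
`T^κ` is the annihilator of `(X̂²)^κ`, and for `κ ∈ K` this is `{(-κξ, ξ) : ξ ∈ X̂, κξ ∈ X̂}`.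
A point `(x¹, x²)` is annihilated by it exactly when `x² - κx¹` pairs integrally with the dual of
`M = Γ + κΓ`. Commensurability of `Γ` with `σ(𝒪_K)` gives `n κ Γ ⊆ Γ` for some `n ≠ 0`, so `M` is
again a lattice, and biduality yields `x² - κx¹ ∈ M`. Hence `T^κ` is the image in `X²` of the graph
`{(x, κx)}`, a copy of `ℝ^d` meeting `Γ²` in the lattice `{x ∈ Γ : κx ∈ Γ}`, and the quotient of
`ℝ^d` by a lattice is the torus `𝕋^d`. For `κ = ∞` the same argument runs with `0 × ℝ^d` in place
of the graph, meeting `Γ²` in `0 × Γ`.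
-/

open Module Topology

theorem AddSubgroup.span_eq_top_of_compactSpace_quotient {E : Type*} [NormedAddCommGroup E]
    [NormedSpace ℝ E] [FiniteDimensional ℝ E] (Γ : AddSubgroup E) [CompactSpace (E ⧸ Γ)] :
    Submodule.span ℝ (Γ : Set E) = ⊤ := by
  by_contra hne
  obtain ⟨f, hf0, hmap⟩ := (Submodule.span ℝ (Γ : Set E)).exists_dual_map_eq_bot_of_lt_top
    (lt_top_iff_ne_top.2 hne) inferInstance
  have hfΓ : ∀ γ ∈ Γ, f γ = 0 := fun γ hγ =>
    (Submodule.mem_bot ℝ).1 (hmap ▸ Submodule.mem_map_of_mem (Submodule.subset_span hγ))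
  let g : E ⧸ Γ →+ ℝ := QuotientAddGroup.lift Γ f.toAddMonoidHom hfΓ
  have hg : Continuous g :=
    (QuotientAddGroup.isQuotientMap_mk Γ).continuous_iff.2 f.continuous_of_finiteDimensional
  have hg_surj : Function.Surjective g := by
    obtain ⟨x, hx⟩ : ∃ x, f x ≠ 0 := by by_contra! h; exact hf0 (LinearMap.ext h)
    intro t
    exact ⟨((t / f x) • x : E), show f ((t / f x) • x) = t by simp [hx]⟩
  exact noncompact_univ ℝ (hg_surj.range_eq ▸ isCompact_range hg)

theorem span_eq_top_of_zsmul_mem {E : Type*} [AddCommGroup E] [Module ℝ E] {Γ L : Set E}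
    (hΓ : Submodule.span ℝ Γ = ⊤) {n : ℤ} (hn : n ≠ 0) (h : ∀ γ ∈ Γ, n • γ ∈ L) :
    Submodule.span ℝ L = ⊤ := by
  refine eq_top_iff.2 (hΓ ▸ Submodule.span_le.2 fun γ hγ => ?_)
  rw [← inv_smul_smul₀ (Int.cast_ne_zero.2 hn : (n : ℝ) ≠ 0) γ, Int.cast_smul_eq_zsmul]
  exact Submodule.smul_mem _ _ (Submodule.subset_span (h γ hγ))

theorem discreteTopology_of_zsmul_mem {E : Type*} [AddCommGroup E] [IsAddTorsionFree E]
    [TopologicalSpace E] [IsTopologicalAddGroup E] {Γ : AddSubgroup E} [DiscreteTopology Γ]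
    {S : Set E} {n : ℤ} (hn : n ≠ 0) (hS : ∀ x ∈ S, n • x ∈ Γ) : DiscreteTopology S :=
  DiscreteTopology.of_continuous_injective (f := fun x : S => (⟨n • (x : E), hS x x.2⟩ : Γ))
    ((continuous_subtype_val.zsmul n).subtype_mk _)
    fun _ _ h => Subtype.ext (zsmul_right_injective hn (congrArg Subtype.val h))

theorem LinearMap.BilinForm.dualSubmodule_dualSubmodule_of_isZLattice {E : Type*}
    [NormedAddCommGroup E] [NormedSpace ℝ E] [FiniteDimensional ℝ E]
    {B : LinearMap.BilinForm ℝ E} (hB : B.Nondegenerate) (hB' : B.IsSymm)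
    (L : Submodule ℤ E) [DiscreteTopology L] [IsZLattice ℝ L] :
    B.dualSubmodule (B.dualSubmodule L) = L := by
  rw [← Basis.ofZLatticeBasis_span ℝ L (Free.chooseBasis ℤ L)]
  exact B.dualSubmodule_dualSubmodule_of_basis hB hB' _

section AddCircleLift

variable {G : Type*} [AddCommGroup G] {ι : Type*} [Fintype ι] [DecidableEq ι] {p : ℝ}
  (f : (ι → ℝ) →+ G) (hf : ∀ t, (∀ i, t i ∈ AddSubgroup.zmultiples p) → f t = 0)

def piAddCircleLift : (ι → AddCircle p) →+ G :=
  ∑ i, (QuotientAddGroup.lift _ (f.comp (AddMonoidHom.single _ i)) fun s hs =>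
    AddMonoidHom.mem_ker.2 <| hf _ fun j => by
      rcases eq_or_ne j i with rfl | hj
      · simp [hs]
      · simp [Pi.single_eq_of_ne hj]).comp
    (Pi.evalAddMonoidHom _ i)

lemma piAddCircleLift_coe (t : ι → ℝ) :
    piAddCircleLift f hf (fun i => (t i : AddCircle p)) = f t := by
  simp only [piAddCircleLift, AddMonoidHom.finsetSum_apply, AddMonoidHom.comp_apply,
    Pi.evalAddMonoidHom_apply, QuotientAddGroup.lift_mk, AddMonoidHom.single_apply]
  rw [← map_sum, Finset.univ_sum_single]

lemma range_piAddCircleLift : Set.range (piAddCircleLift f hf) = Set.range f := by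
  rw [← (Function.Surjective.piMap fun _ => QuotientAddGroup.mk_surjective).range_comp]
  exact congrArg Set.range (funext (piAddCircleLift_coe f hf))

variable [TopologicalSpace G] [ContinuousAdd G]

lemma continuous_piAddCircleLift (hfc : Continuous f) : Continuous (piAddCircleLift f hf) := by
  simp only [piAddCircleLift, AddMonoidHom.coe_finsetSum, Finset.sum_fn]
  refine continuous_finsetSum _ fun i _ => ?_
  exact ((QuotientAddGroup.isQuotientMap_mk _).continuous_iff.2
    (hfc.comp (continuous_single i))).comp (continuous_apply i)

lemma isClosedEmbedding_piAddCircleLift [T2Space G] [Fact (0 < p)] (hfc : Continuous f)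
    (hker : ∀ t, f t = 0 → ∀ i, t i ∈ AddSubgroup.zmultiples p) :
    IsClosedEmbedding (piAddCircleLift f hf) := by
  refine (continuous_piAddCircleLift f hf hfc).isClosedEmbedding ?_
  rw [injective_iff_map_eq_zero]
  intro u hu
  obtain ⟨t, rfl⟩ := Function.Surjective.piMap (fun _ => QuotientAddGroup.mk_surjective) u
  change piAddCircleLift f hf (fun i => (t i : AddCircle p)) = 0 at hu
  rw [piAddCircleLift_coe] at hu
  funext i
  exact (QuotientAddGroup.eq_zero_iff _).2 (hker t hu i)

end AddCircleLift

theorem exists_addCircle_isClosedEmbedding_range_eq {E F : Type*} [NormedAddCommGroup E]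
    [NormedSpace ℝ E] [FiniteDimensional ℝ E] [AddCommGroup F] [TopologicalSpace F]
    [ContinuousAdd F] [T2Space F] {d : ℕ} (hd : finrank ℝ E = d)
    (L : AddSubgroup E) [DiscreteTopology L] (hL : Submodule.span ℝ (L : Set E) = ⊤)
    (f : E →+ F) (hfc : Continuous f) (hker : ∀ x, f x = 0 ↔ x ∈ L) :
    ∃ φ : (Fin d → AddCircle (1 : ℝ)) →+ F, IsClosedEmbedding φ ∧ Set.range φ = Set.range f := by
  have : DiscreteTopology L.toIntSubmodule := ‹_›
  have : IsZLattice ℝ L.toIntSubmodule := ⟨by rwa [AddSubgroup.coe_toIntSubmodule]⟩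
  have hcard : Fintype.card (Free.ChooseBasisIndex ℤ L.toIntSubmodule) = d := by
    rw [← finrank_eq_card_chooseBasisIndex, ZLattice.rank ℝ, hd]
  let bL := (Free.chooseBasis ℤ L.toIntSubmodule).reindex (Fintype.equivFinOfCardEq hcard)
  let b := bL.ofZLatticeBasis ℝ L.toIntSubmodule
  let g := f.comp b.equivFun.symm.toLinearMap.toAddMonoidHom
  have hg : ∀ t, g t = 0 ↔ ∀ i, t i ∈ AddSubgroup.zmultiples (1 : ℝ) := by
    intro t
    change f (b.equivFun.symm t) = 0 ↔ _
    rw [hker]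
    change b.equivFun.symm t ∈ L.toIntSubmodule ↔ _
    rw [← Basis.ofZLatticeBasis_span ℝ L.toIntSubmodule bL, Basis.mem_span_iff_repr_mem ℤ b]
    simp only [← Basis.equivFun_apply, LinearEquiv.apply_symm_apply,
      AddSubgroup.mem_zmultiples_iff, zsmul_one, algebraMap_int_eq, eq_intCast, Set.mem_range]
  refine ⟨piAddCircleLift g fun t => (hg t).2, isClosedEmbedding_piAddCircleLift _ _
    (hfc.comp b.equivFun.symm.toLinearMap.continuous_of_finiteDimensional) fun t => (hg t).1, ?_⟩
  rw [range_piAddCircleLift]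
  exact b.equivFun.symm.surjective.range_comp f

section Pairing

variable {r₁ r₂ : ℕ}

lemma pairAmb_add_left (ξ η x : Amb r₁ r₂) :
    pairAmb (ξ + η) x = pairAmb ξ x + pairAmb η x := by
  simp only [pairAmb, Prod.fst_add, Prod.snd_add, Pi.add_apply, add_mul, Complex.add_re,
    mul_add, Finset.sum_add_distrib]
  ring

lemma pairAmb_smul_left (c : ℝ) (ξ x : Amb r₁ r₂) : pairAmb (c • ξ) x = c * pairAmb ξ x := by
  simp only [pairAmb, Prod.smul_fst, Prod.smul_snd, Pi.smul_apply, smul_eq_mul,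
    Complex.real_smul, mul_assoc, Complex.re_ofReal_mul, mul_left_comm, Finset.mul_sum, mul_add]

lemma pairAmb_comm (ξ x : Amb r₁ r₂) : pairAmb ξ x = pairAmb x ξ := by
  simp only [pairAmb, mul_comm]

def pairForm (r₁ r₂ : ℕ) : LinearMap.BilinForm ℝ (Amb r₁ r₂) :=
  LinearMap.mk₂ ℝ pairAmb pairAmb_add_left pairAmb_smul_left
    (fun ξ x y => by simp only [pairAmb_comm ξ, pairAmb_add_left])
    (fun c ξ x => by simp only [pairAmb_comm ξ, pairAmb_smul_left, smul_eq_mul])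

@[simp] lemma pairForm_apply (ξ x : Amb r₁ r₂) : pairForm r₁ r₂ ξ x = pairAmb ξ x := rfl

lemma pairForm_isSymm : (pairForm r₁ r₂).IsSymm :=
  ⟨fun ξ x => pairAmb_comm ξ x⟩

lemma pairAmb_neg_left (ξ x : Amb r₁ r₂) : pairAmb (-ξ) x = -pairAmb ξ x :=
  LinearMap.congr_fun (map_neg (pairForm r₁ r₂) ξ) x

lemma pairAmb_sub_right (ξ x y : Amb r₁ r₂) : pairAmb ξ (x - y) = pairAmb ξ x - pairAmb ξ y :=
  map_sub (pairForm r₁ r₂ ξ) x y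

lemma pairAmb_self_conj (ξ : Amb r₁ r₂) :
    pairAmb ξ (ξ.1, star ξ.2) = (∑ i, ξ.1 i ^ 2) + ∑ j, 2 * ‖ξ.2 j‖ ^ 2 := by
  simp [pairAmb, Complex.mul_conj', sq]

lemma pairForm_nondegenerate : (pairForm r₁ r₂).Nondegenerate := by
  refine pairForm_isSymm.isRefl.nondegenerate_iff_separatingLeft.2 fun ξ hξ => ?_
  have h : _ = (0 : ℝ) := (pairAmb_self_conj ξ).symm.trans (hξ (ξ.1, star ξ.2))
  rw [add_eq_zero_iff_of_nonneg (by positivity) (by positivity),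
    Finset.sum_eq_zero_iff_of_nonneg (by intros; positivity),
    Finset.sum_eq_zero_iff_of_nonneg (by intros; positivity)] at h
  ext i
  · simpa using h.1 i (Finset.mem_univ i)
  · simpa using h.2 i (Finset.mem_univ i)

lemma mem_hatX_iff_mem_dualSubmodule {Λ : AddSubgroup (Amb r₁ r₂)} {ξ : Amb r₁ r₂} :
    ξ ∈ hatX Λ ↔ ξ ∈ (pairForm r₁ r₂).dualSubmodule Λ.toIntSubmodule := by
  simp only [hatX, Set.mem_ofPred_eq, LinearMap.BilinForm.mem_dualSubmodule, Submodule.mem_one,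
    pairForm_apply, algebraMap_int_eq, eq_intCast, eq_comm]
  rfl

lemma mem_of_forall_mem_hatX (Λ : AddSubgroup (Amb r₁ r₂)) [DiscreteTopology Λ]
    (hΛ : Submodule.span ℝ (Λ : Set (Amb r₁ r₂)) = ⊤) {x : Amb r₁ r₂}
    (hx : ∀ ξ ∈ hatX Λ, ∃ m : ℤ, pairAmb ξ x = m) : x ∈ Λ := by
  have : DiscreteTopology Λ.toIntSubmodule := ‹_›
  have : IsZLattice ℝ Λ.toIntSubmodule := ⟨by rwa [AddSubgroup.coe_toIntSubmodule]⟩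
  change x ∈ Λ.toIntSubmodule
  rw [← LinearMap.BilinForm.dualSubmodule_dualSubmodule_of_isZLattice pairForm_nondegenerate
    pairForm_isSymm Λ.toIntSubmodule]
  refine (LinearMap.BilinForm.mem_dualSubmodule _).2 fun ξ hξ => ?_
  obtain ⟨m, hm⟩ := hx ξ (mem_hatX_iff_mem_dualSubmodule.2 hξ)
  exact Submodule.mem_one.2 ⟨m, by simp [hm, pairAmb_comm x]⟩

end Pairing

section Multiplication

variable {K : Type} [Field K] {r₁ r₂ : ℕ} (σR : Fin r₁ → (K →+* ℝ)) (σC : Fin r₂ → (K →+* ℂ))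

def mulKₗ (θ : K) : Amb r₁ r₂ →ₗ[ℝ] Amb r₁ r₂ where
  toFun := mulK σR σC θ
  map_add' x y := by ext <;> simp [mulK, mul_add]
  map_smul' c x := by ext <;> simp [mulK, mul_left_comm]

@[simp] lemma mulKₗ_apply (θ : K) (x : Amb r₁ r₂) : mulKₗ σR σC θ x = mulK σR σC θ x := rfl

lemma mulK_zsmul_left (m : ℤ) (θ : K) (x : Amb r₁ r₂) :
    mulK σR σC (m • θ) x = m • mulK σR σC θ x := by
  ext <;> simp [mulK, mul_assoc]

lemma mulK_embK (θ θ' : K) : mulK σR σC θ (embK σR σC θ') = embK σR σC (θ * θ') := by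
  ext <;> simp [mulK, embK]

lemma pairAmb_mulK (θ : K) (ξ x : Amb r₁ r₂) :
    pairAmb (mulK σR σC θ ξ) x = pairAmb ξ (mulK σR σC θ x) := by
  simp only [pairAmb, mulK, mul_assoc, mul_left_comm]

variable [NumberField K]

lemma ringLat_le_comap_mulK (a : NumberField.RingOfIntegers K) :
    ringLat σR σC ≤ (ringLat σR σC).comap (mulKₗ σR σC (a : K)).toAddMonoidHom :=
  (AddSubgroup.closure_le _).2 <| by
    rintro _ ⟨b, rfl⟩
    exact AddSubgroup.subset_closure ⟨a * b, by simp [mulK_embK]⟩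

lemma exists_zsmul_mulK_mem_ringLat (κ : K) :
    ∃ N : ℤ, N ≠ 0 ∧ ∀ x ∈ ringLat σR σC, N • mulK σR σC κ x ∈ ringLat σR σC := by
  obtain ⟨N, hN, hint⟩ :=
    ((IsFractionRing.isAlgebraic_iff ℤ ℚ K).2 (.of_finite ℚ κ)).exists_integral_multiple
  refine ⟨N, hN, fun x hx => ?_⟩
  rw [← mulK_zsmul_left]
  exact ringLat_le_comap_mulK σR σC ⟨N • κ, hint⟩ hx

lemma exists_zsmul_mulK_mem {Γ : AddSubgroup (Amb r₁ r₂)}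
    (h₁ : Γ.relIndex (ringLat σR σC) ≠ 0) (h₂ : (ringLat σR σC).relIndex Γ ≠ 0) (κ : K) :
    ∃ n : ℤ, n ≠ 0 ∧ ∀ γ ∈ Γ, n • mulK σR σC κ γ ∈ Γ := by
  obtain ⟨N, hN, hNκ⟩ := exists_zsmul_mulK_mem_ringLat σR σC κ
  refine ⟨Γ.relIndex (ringLat σR σC) * N * (ringLat σR σC).relIndex Γ, by positivity, ?_⟩
  intro γ hγ
  have h := Γ.nsmul_relIndex_mem (hNκ _ ((ringLat σR σC).nsmul_relIndex_mem hγ))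
  rw [← mulKₗ_apply, map_nsmul, mulKₗ_apply] at h
  convert h using 1
  simp only [← natCast_zsmul, smul_smul, mul_assoc]

end Multiplication

section Subtorus

variable {K : Type} [Field K] {r₁ r₂ : ℕ} (σR : Fin r₁ → (K →+* ℝ)) (σC : Fin r₂ → (K →+* ℂ))
  (Γ : AddSubgroup (Amb r₁ r₂))

theorem Tk_none_eq_range [DiscreteTopology Γ]
    (hΓ : Submodule.span ℝ (Γ : Set (Amb r₁ r₂)) = ⊤) :
    Tk σR σC Γ none =
      Set.range fun x : Amb r₁ r₂ => (QuotientAddGroup.mk (0, x) : _ ⧸ Γ.prod Γ) := by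
  ext y
  constructor
  · rintro ⟨x, rfl, hx⟩
    have hx₁ : x.1 ∈ Γ := mem_of_forall_mem_hatX Γ hΓ fun ξ hξ => by
      simpa [pairAmb] using hx (ξ, 0) ⟨hξ, rfl⟩
    exact ⟨x.2, QuotientAddGroup.eq.2 (by simpa [AddSubgroup.mem_prod] using hx₁)⟩
  · rintro ⟨x, rfl⟩
    exact ⟨(0, x), rfl, fun ξ hξ => ⟨0, by simp [pairAmb, show ξ.2 = 0 from hξ.2]⟩⟩

lemma neg_mulK_mem_hatSq {κ : K} {ξ : Amb r₁ r₂}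
    (hξ : ξ ∈ hatX (Γ ⊔ Γ.map (mulKₗ σR σC κ).toAddMonoidHom)) :
    (-mulK σR σC κ ξ, ξ) ∈ hatSq σR σC Γ (some κ) := by
  refine ⟨fun γ hγ => ?_, fun γ hγ => hξ γ (AddSubgroup.mem_sup_left hγ), neg_add_cancel _⟩
  obtain ⟨m, hm⟩ := hξ _ (AddSubgroup.mem_sup_right (AddSubgroup.mem_map_of_mem _ hγ))
  exact ⟨-m, by rw [pairAmb_neg_left, pairAmb_mulK, Int.cast_neg, ← hm]; rfl⟩

theorem Tk_some_eq_range [DiscreteTopology Γ]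
    (hΓ : Submodule.span ℝ (Γ : Set (Amb r₁ r₂)) = ⊤) {κ : K} {n : ℤ} (hn : n ≠ 0)
    (hnκ : ∀ γ ∈ Γ, n • mulK σR σC κ γ ∈ Γ) :
    Tk σR σC Γ (some κ) =
      Set.range fun x : Amb r₁ r₂ => (QuotientAddGroup.mk (x, mulK σR σC κ x) : _ ⧸ Γ.prod Γ) := by
  ext y
  constructor
  · rintro ⟨x, rfl, hx⟩
    set M := Γ ⊔ Γ.map (mulKₗ σR σC κ).toAddMonoidHom
    have : DiscreteTopology M := by
      refine discreteTopology_of_zsmul_mem (Γ := Γ) (S := M) hn fun y hy => ?_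
      obtain ⟨a, ha, _, ⟨b, hb, rfl⟩, rfl⟩ := AddSubgroup.mem_sup.1 (SetLike.mem_coe.1 hy)
      exact smul_add n a _ ▸ Γ.add_mem (Γ.zsmul_mem ha n) (hnκ b hb)
    have hM : Submodule.span ℝ (M : Set (Amb r₁ r₂)) = ⊤ :=
      top_unique (hΓ ▸ Submodule.span_mono (le_sup_left : Γ ≤ M))
    have hδ : x.2 - mulK σR σC κ x.1 ∈ M := mem_of_forall_mem_hatX M hM fun ξ hξ => by
      obtain ⟨m, hm⟩ := hx _ (neg_mulK_mem_hatSq σR σC Γ hξ)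
      exact ⟨m, by rw [← hm, pairAmb_sub_right, pairAmb_neg_left, pairAmb_mulK]; ring⟩
    obtain ⟨a, ha, _, ⟨b, hb, rfl⟩, hab⟩ := AddSubgroup.mem_sup.1 hδ
    refine ⟨x.1 + b, QuotientAddGroup.eq.2 (AddSubgroup.mem_prod.2 ⟨?_, ?_⟩)⟩
    · simpa using Γ.neg_mem hb
    · rw [eq_sub_iff_add_eq] at hab
      convert ha using 1
      simp only [Prod.snd_add, Prod.snd_neg, ← hab, ← mulKₗ_apply, map_add,
        LinearMap.toAddMonoidHom_coe]
      abel
  · rintro ⟨x, rfl⟩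
    refine ⟨(x, mulK σR σC κ x), rfl, fun ξ hξ => ⟨0, ?_⟩⟩
    rw [← pairAmb_mulK, ← pairAmb_add_left, hξ.2.2]
    simp [pairAmb]

end Subtorus

lemma finrank_amb (r₁ r₂ : ℕ) : finrank ℝ (Amb r₁ r₂) = r₁ + 2 * r₂ := by
  simp [Module.finrank_prod, Module.finrank_pi_fintype, mul_comm]

theorem Tk_isomorphic_to_torus_general
    {K : Type} [Field K] [NumberField K] (r₁ r₂ d : ℕ)
    (hd2 : r₁ + 2 * r₂ = d)
    (σR : Fin r₁ → (K →+* ℝ)) (σC : Fin r₂ → (K →+* ℂ))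
    (Γ : AddSubgroup (Amb r₁ r₂))
    (hΓdisc : DiscreteTopology Γ)
    (hΓcocpt : CompactSpace (Amb r₁ r₂ ⧸ Γ))
    (hΓcomm₁ : Γ.relIndex (ringLat σR σC) ≠ 0)
    (hΓcomm₂ : (ringLat σR σC).relIndex Γ ≠ 0)
    :
    ∀ κ : Option K,
      ∃ φ : (Fin d → AddCircle (1 : ℝ)) →+ ((Amb r₁ r₂ × Amb r₁ r₂) ⧸ Γ.prod Γ),
        Topology.IsClosedEmbedding φ ∧ Set.range φ = Tk σR σC Γ κ
    := by
  have hd : finrank ℝ (Amb r₁ r₂) = d := (finrank_amb r₁ r₂).trans hd2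
  have hspan := Γ.span_eq_top_of_compactSpace_quotient
  have : IsClosed (Γ.prod Γ : Set (Amb r₁ r₂ × Amb r₁ r₂)) :=
    AddSubgroup.isClosed_of_discrete.prod AddSubgroup.isClosed_of_discrete
  let π := QuotientAddGroup.mk' (Γ.prod Γ)
  have hπ : Continuous π := (QuotientAddGroup.isQuotientMap_mk _).continuous
  rintro (_ | κ)
  · obtain ⟨φ, hφ, hrange⟩ := exists_addCircle_isClosedEmbedding_range_eq hd Γ hspan
      (π.comp (AddMonoidHom.inr _ _)) (hπ.comp (continuous_const.prodMk continuous_id))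
      fun x => by simp [π, AddSubgroup.mem_prod]
    exact ⟨φ, hφ, hrange.trans (Tk_none_eq_range σR σC Γ hspan).symm⟩
  · obtain ⟨n, hn, hnκ⟩ := exists_zsmul_mulK_mem σR σC hΓcomm₁ hΓcomm₂ κ
    let ψ := LinearMap.prod LinearMap.id (mulKₗ σR σC κ)
    let Γκ := Γ ⊓ Γ.comap (mulKₗ σR σC κ).toAddMonoidHom
    have : DiscreteTopology Γκ := .of_subset hΓdisc (inf_le_left : Γκ ≤ Γ)
    have hspanκ : Submodule.span ℝ (Γκ : Set (Amb r₁ r₂)) = ⊤ :=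
      span_eq_top_of_zsmul_mem hspan hn fun γ hγ =>
        ⟨Γ.zsmul_mem hγ n, show mulKₗ σR σC κ (n • γ) ∈ Γ from
          (map_zsmul (mulKₗ σR σC κ) n γ).symm ▸ hnκ γ hγ⟩
    obtain ⟨φ, hφ, hrange⟩ := exists_addCircle_isClosedEmbedding_range_eq hd Γκ hspanκ
      (π.comp ψ.toAddMonoidHom) (hπ.comp ψ.continuous_of_finiteDimensional)
      fun x => by simp [π, ψ, Γκ, AddSubgroup.mem_prod]
    exact ⟨φ, hφ, hrange.trans (Tk_some_eq_range σR σC Γ hspan hn hnκ).symm⟩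

theorem Tk_isomorphic_to_torus
    {K : Type} [Field K] [NumberField K] (r r₁ r₂ d : ℕ)
    (hr : r + 1 = r₁ + r₂) (hr2 : 2 ≤ r)
    (hd : Module.finrank ℚ K = d) (hd2 : r₁ + 2 * r₂ = d)
    (σR : Fin r₁ → (K →+* ℝ)) (σC : Fin r₂ → (K →+* ℂ))
    (hσR : Function.Injective σR) (hσC : Function.Injective σC)
    (hσCconj : ∀ j j' : Fin r₂, (starRingEnd ℂ).comp (σC j) ≠ σC j')
    (hCM : ¬(r₁ = 0 ∧ ∃ F : IntermediateField ℚ K, Module.finrank F K = 2 ∧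
        ∀ φ : F →+* ℂ, ∀ x : F, (φ x).im = 0))
    (Γ : AddSubgroup (Amb r₁ r₂))
    (hΓK : ∀ γ ∈ Γ, ∃ θ : K, embK σR σC θ = γ)
    (hΓdisc : DiscreteTopology Γ)
    (hΓcocpt : CompactSpace (Amb r₁ r₂ ⧸ Γ))
    (hΓcomm₁ : Γ.relIndex (ringLat σR σC) ≠ 0)
    (hΓcomm₂ : (ringLat σR σC).relIndex Γ ≠ 0)
    :
    ∀ κ : Option K,
      ∃ φ : (Fin d → AddCircle (1 : ℝ)) →+ ((Amb r₁ r₂ × Amb r₁ r₂) ⧸ Γ.prod Γ),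
        Topology.IsClosedEmbedding φ ∧ Set.range φ = Tk σR σC Γ κ :=
  Tk_isomorphic_to_torus_general r₁ r₂ d hd2 σR σC Γ hΓdisc hΓcocpt hΓcomm₁ hΓcomm₂

end
end

section
/- In the number field model, for every finite-index subgroup H ≤ ℤ^r, every i ∈ I and every δ > 0, there exists a nonzero n ∈ H such that |Log ζ_i^n| < δ, where Log denotes the principal branch of the complex logarithm. -/
noncomputable section

/-! The map `n ↦ σ_i(ζ^n)` is a homomorphism `ℤ^r → ℂˣ`, and `u ↦ (log ‖u‖, arg u)` identifies
`ℂˣ` with `ℝ × ℝ/2πℤ`; `‖Log u‖` is small as soon as both coordinates are. Inside `H` sits a copy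
of `ℤ²`, and a homomorphism `ℤ² → ℝ × G` with `G` compact maps infinitely many points into
`[-C, C] × G`. By compactness two of these images are close, and the difference of the two
points is the required `n`. -/

open Real Set Metric

instance : CompactSpace Real.Angle :=
  haveI : Fact (0 < 2 * π) := ⟨two_pi_pos⟩
  inferInstanceAs (CompactSpace (AddCircle (2 * π)))

theorem Real.Angle.norm_coe_of_abs_le {x : ℝ} (h : |x| ≤ π) : ‖(x : Angle)‖ = |x| :=
  (AddCircle.norm_coe_eq_abs_iff (p := 2 * π) two_pi_pos.ne').2
    (by rw [abs_of_pos two_pi_pos]; linarith)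

theorem Set.Infinite.exists_ne_dist_lt_of_mapsTo {α X : Type*} [PseudoMetricSpace X]
    {s : Set α} {K : Set X} {F : α → X} (hs : s.Infinite) (hF : MapsTo F s K)
    (hK : IsCompact K) {ε : ℝ} (hε : 0 < ε) :
    ∃ x ∈ s, ∃ y ∈ s, x ≠ y ∧ dist (F x) (F y) < ε := by
  obtain ⟨t, -, ht, hcover⟩ := hK.finite_cover_balls (half_pos hε)
  have hcenter : ∀ z ∈ K, ∃ c ∈ t, z ∈ ball c (ε / 2) := fun z hz => by
    simpa only [mem_iUnion₂, exists_prop] using hcover hz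
  choose! c hct hc using hcenter
  obtain ⟨x, hx, y, hy, hxy, hcxy⟩ :=
    hs.exists_ne_map_eq_of_mapsTo (fun x hx => hct _ (hF hx)) ht
  refine ⟨x, hx, y, hy, hxy, ?_⟩
  calc dist (F x) (F y) ≤ dist (F x) (c (F x)) + dist (c (F y)) (F y) := by
        rw [hcxy]; exact dist_triangle _ _ _
    _ < ε / 2 + ε / 2 := add_lt_add (hc _ (hF hx)) (by rw [dist_comm]; exact hc _ (hF hy))
    _ = ε := add_halves ε

namespace AddMonoidHom

theorem apply_int_prod (g : ℤ × ℤ →+ ℝ) (p q : ℤ) : g (p, q) = p * g (1, 0) + q * g (0, 1) := by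
  rw [← zsmul_eq_mul, ← zsmul_eq_mul, ← map_zsmul, ← map_zsmul, ← map_add]
  simp

theorem infinite_setOf_abs_le (g : ℤ × ℤ →+ ℝ) : {v | |g v| ≤ |g (0, 1)|}.Infinite := by
  by_cases hb : g (0, 1) = 0
  · refine infinite_of_injective_forall_mem (f := fun q : ℤ => ((0 : ℤ), q))
      (fun q q' h => (Prod.mk.inj h).2) fun q => ?_
    simp [apply_int_prod g 0 q, hb]
  · set a := g (1, 0)
    set b := g (0, 1)
    refine infinite_of_injective_forall_mem (f := fun p : ℤ => (p, -round (p * a / b)))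
      (fun p p' h => (Prod.mk.inj h).1) fun p => ?_
    have hv : g (p, -round (p * a / b)) = b * (p * a / b - round (p * a / b)) := by
      rw [apply_int_prod]; field_simp; push_cast; ring
    simp only [mem_ofPred_eq, hv, abs_mul]
    exact mul_le_of_le_one_right (abs_nonneg b) ((abs_sub_round _).trans (by norm_num))

theorem exists_ne_zero_norm_lt {G : Type*} [SeminormedAddCommGroup G] [CompactSpace G]
    (f : ℤ × ℤ →+ ℝ × G) {ε : ℝ} (hε : 0 < ε) : ∃ v ≠ 0, ‖f v‖ < ε := by
  set g := (fst ℝ G).comp f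
  have hmaps : MapsTo f {v | |g v| ≤ |g (0, 1)|} (closedBall 0 |g (0, 1)| ×ˢ univ) :=
    fun v hv => ⟨by simpa [g] using hv, trivial⟩
  obtain ⟨x, -, y, -, hxy, hdist⟩ := g.infinite_setOf_abs_le.exists_ne_dist_lt_of_mapsTo hmaps
    ((isCompact_closedBall 0 _).prod isCompact_univ) hε
  exact ⟨x - y, sub_ne_zero.2 hxy, by rwa [map_sub, ← dist_eq_norm]⟩

end AddMonoidHom

namespace Complex

def logPolar : Additive ℂˣ →+ ℝ × Angle where
  toFun u := (Real.log ‖(u.toMul : ℂ)‖, (arg u.toMul : Angle))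
  map_zero' := by simp
  map_add' u v := by simp [Real.log_mul, arg_mul_coe_angle]

theorem norm_log_le_two_mul_norm_logPolar (u : ℂˣ) :
    ‖log u‖ ≤ 2 * ‖logPolar (Additive.ofMul u)‖ := by
  have harg : ‖(arg u : Angle)‖ = |arg u| := Angle.norm_coe_of_abs_le (abs_arg_le_pi u)
  calc ‖log u‖ ≤ |(log u).re| + |(log u).im| := norm_le_abs_re_add_abs_im _
    _ = |Real.log ‖(u : ℂ)‖| + ‖(arg u : Angle)‖ := by rw [log_re, log_im, harg]
    _ ≤ 2 * ‖logPolar (Additive.ofMul u)‖ := by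
      rw [Prod.norm_def]
      simp only [logPolar, AddMonoidHom.coe_mk, ZeroHom.coe_mk, toMul_ofMul, Real.norm_eq_abs]
      linarith [le_max_left |Real.log ‖(u : ℂ)‖| ‖(arg u : Angle)‖,
        le_max_right |Real.log ‖(u : ℂ)‖| ‖(arg u : Angle)‖]

end Complex

theorem AddSubgroup.exists_injective_prod_int {ι : Type*} [DecidableEq ι]
    (H : AddSubgroup (ι → ℤ)) (hH : H.index ≠ 0) {i j : ι} (hij : i ≠ j) :
    ∃ φ : ℤ × ℤ →+ (ι → ℤ), Function.Injective φ ∧ ∀ v, φ v ∈ H := by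
  refine ⟨H.index • (AddMonoidHom.single (fun _ => ℤ) i).coprod (AddMonoidHom.single _ j), ?_,
    fun v => H.nsmul_index_mem _⟩
  refine (injective_iff_map_eq_zero _).2 fun v hv => ?_
  have hi := congrFun hv i
  have hj := congrFun hv j
  simp [hij, hij.symm, hH] at hi hj
  exact Prod.ext hi hj

theorem exists_ringHom_coe_eq_embC {K : Type} [Field K] {r₁ r₂ : ℕ} (σR : Fin r₁ → (K →+* ℝ))
    (σC : Fin r₂ → (K →+* ℂ)) (i : Fin r₁ ⊕ Fin r₂) : ∃ ψ : K →+* ℂ, ⇑ψ = embC σR σC i := by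
  cases i with
  | inl a => exact ⟨Complex.ofRealHom.comp (σR a), rfl⟩
  | inr a => exact ⟨σC a, rfl⟩

theorem exists_small_log_general
    {K : Type} [Field K] [NumberField K] (r r₁ r₂ : ℕ)
    (hr2 : 2 ≤ r)
    (σR : Fin r₁ → (K →+* ℝ)) (σC : Fin r₂ → (K →+* ℂ))
    (ζ : (Fin r → ℤ) → (NumberField.RingOfIntegers K)ˣ)
    (hζhom : ∀ m n, ζ (m + n) = ζ m * ζ n)
    :
    ∀ H : AddSubgroup (Fin r → ℤ), H.index ≠ 0 →
      ∀ (i : Fin r₁ ⊕ Fin r₂) (δ : ℝ), 0 < δ →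
        ∃ n ∈ H, n ≠ 0 ∧
          ‖Complex.log (embC σR σC i (unitToK (ζ n)))‖ < δ
    := by
  intro H hH i δ hδ
  obtain ⟨ψ, hψ⟩ := exists_ringHom_coe_eq_embC σR σC i
  obtain ⟨φ, hφ, hφH⟩ := H.exists_injective_prod_int hH
    (i := ⟨0, by omega⟩) (j := ⟨1, by omega⟩) (by simp [Fin.ext_iff])
  let w : (Fin r → ℤ) →+ Additive ℂˣ := AddMonoidHom.mk'
    (fun n => .ofMul (Units.map (ψ.comp (algebraMap (NumberField.RingOfIntegers K) K)) (ζ n)))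
    (fun m n => by simp [hζhom])
  obtain ⟨v, hv0, hv⟩ := (Complex.logPolar.comp (w.comp φ)).exists_ne_zero_norm_lt (half_pos hδ)
  refine ⟨φ v, hφH v, fun h => hv0 (hφ (h.trans (map_zero φ).symm)), ?_⟩
  calc ‖Complex.log (embC σR σC i (unitToK (ζ (φ v))))‖ = ‖Complex.log (w (φ v)).toMul‖ := by
        rw [← hψ]; rfl
    _ ≤ 2 * ‖Complex.logPolar (w (φ v))‖ := Complex.norm_log_le_two_mul_norm_logPolar _
    _ < δ := by linarith [show ‖Complex.logPolar (w (φ v))‖ < δ / 2 from hv]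

theorem exists_small_log
    {K : Type} [Field K] [NumberField K] (r r₁ r₂ d : ℕ)
    (hr : r + 1 = r₁ + r₂) (hr2 : 2 ≤ r)
    (hd : Module.finrank ℚ K = d) (hd2 : r₁ + 2 * r₂ = d)
    (σR : Fin r₁ → (K →+* ℝ)) (σC : Fin r₂ → (K →+* ℂ))
    (hσR : Function.Injective σR) (hσC : Function.Injective σC)
    (hσCconj : ∀ j j' : Fin r₂, (starRingEnd ℂ).comp (σC j) ≠ σC j')
    (hCM : ¬(r₁ = 0 ∧ ∃ F : IntermediateField ℚ K, Module.finrank F K = 2 ∧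
        ∀ φ : F →+* ℂ, ∀ x : F, (φ x).im = 0))
    (ζ : (Fin r → ℤ) → (NumberField.RingOfIntegers K)ˣ)
    (hζhom : ∀ m n, ζ (m + n) = ζ m * ζ n)
    (hζinj : Function.Injective ζ)
    (hζfin : (Subgroup.closure (Set.range ζ)).index ≠ 0)
    :
    ∀ H : AddSubgroup (Fin r → ℤ), H.index ≠ 0 →
      ∀ (i : Fin r₁ ⊕ Fin r₂) (δ : ℝ), 0 < δ →
        ∃ n ∈ H, n ≠ 0 ∧
          ‖Complex.log (embC σR σC i (unitToK (ζ n)))‖ < δ :=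
  exists_small_log_general r r₁ r₂ hr2 σR σC ζ hζhom

end
end
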